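/- arXiv:2603.24566 — 2 statements merged into one kernel-verified Lean document; each statement's English description precedes it below -/
import Mathlib

section
/- Given vectors b_e, b_u ∈ ℝ^m and scalars c_e, c_u ∈ ℝ, the system b_eᵀv ≥ c_e, b_uᵀv ≥ c_u admits a solution v ∈ ℝ^m if and only if the following three conditions hold: (1) b_e = 0 implies c_e ≤ 0; (2) b_u = 0 implies c_u ≤ 0; (3) if ‖b_e‖·‖b_u‖ + ⟨b_e, b_u⟩ = 0, then c_e·‖b_u‖ + c_u·‖b_e‖ ≤ 0. -/
/-!
Put `s = ‖a‖‖b‖ + ⟪a, b⟫ ≥ 0` (Cauchy–Schwarz) and `w = ‖b‖ • a + ‖a‖ • b`, so that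
`⟪a, w⟫ = ‖a‖ s` and `⟪b, w⟫ = ‖b‖ s`. If `s > 0`, a large multiple of `w` satisfies both
constraints. If `s = 0`, then `a` and `b` are anti-parallel and `w = 0`, so
`‖b‖ ⟪a, v⟫ + ‖a‖ ⟪b, v⟫ = 0` for every `v`: this forces `c‖b‖ + d‖a‖ ≤ 0`, and conversely under
that condition the least-norm solution of `⟪a, v⟫ = c` also solves the second constraint.
-/

open scoped InnerProductSpace

section

variable {E : Type*} [NormedAddCommGroup E] [InnerProductSpace ℝ E]

lemma norm_mul_norm_add_real_inner_nonneg (a b : E) : 0 ≤ ‖a‖ * ‖b‖ + ⟪a, b⟫_ℝ := by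
  linarith [(abs_le.mp (abs_real_inner_le_norm a b)).1]

lemma real_inner_norm_smul_add_norm_smul_left (a b : E) :
    ⟪a, ‖b‖ • a + ‖a‖ • b⟫_ℝ = ‖a‖ * (‖a‖ * ‖b‖ + ⟪a, b⟫_ℝ) := by
  rw [inner_add_right, real_inner_smul_right, real_inner_smul_right,
    real_inner_self_eq_norm_sq]
  ring

lemma real_inner_norm_smul_add_norm_smul_right (a b : E) :
    ⟪b, ‖b‖ • a + ‖a‖ • b⟫_ℝ = ‖b‖ * (‖a‖ * ‖b‖ + ⟪a, b⟫_ℝ) := by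
  rw [add_comm, real_inner_norm_smul_add_norm_smul_left, real_inner_comm, mul_comm ‖b‖ ‖a‖]

lemma norm_smul_add_norm_smul_eq_zero {a b : E} (h : ‖a‖ * ‖b‖ + ⟪a, b⟫_ℝ = 0) :
    ‖b‖ • a + ‖a‖ • b = 0 := by
  have hneg : ⟪a, -b⟫_ℝ = ‖a‖ * ‖-b‖ := by
    rw [inner_neg_right, norm_neg]
    linarith
  have hpar := inner_eq_norm_mul_iff_real.mp hneg
  rw [norm_neg, smul_neg] at hpar
  exact add_eq_zero_iff_eq_neg.mpr hpar

lemma exists_le_real_inner {b : E} {c : ℝ} (h : b = 0 → c ≤ 0) : ∃ v : E, c ≤ ⟪b, v⟫_ℝ := by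
  by_cases hb : b = 0
  · exact ⟨0, by simpa using h hb⟩
  · refine ⟨(c / ‖b‖ ^ 2) • b, le_of_eq ?_⟩
    rw [real_inner_smul_right, real_inner_self_eq_norm_sq,
      div_mul_cancel₀ _ (pow_ne_zero 2 (norm_ne_zero_iff.mpr hb))]

lemma mul_norm_add_mul_norm_nonpos {a b v : E} {c d : ℝ} (hc : c ≤ ⟪a, v⟫_ℝ)
    (hd : d ≤ ⟪b, v⟫_ℝ) (h : ‖a‖ * ‖b‖ + ⟪a, b⟫_ℝ = 0) : c * ‖b‖ + d * ‖a‖ ≤ 0 := by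
  have hw : ‖b‖ * ⟪a, v⟫_ℝ + ‖a‖ * ⟪b, v⟫_ℝ = 0 := by
    rw [← real_inner_smul_left, ← real_inner_smul_left, ← inner_add_left,
      norm_smul_add_norm_smul_eq_zero h, inner_zero_left]
  nlinarith [mul_le_mul_of_nonneg_left hc (norm_nonneg b),
    mul_le_mul_of_nonneg_left hd (norm_nonneg a)]

lemma exists_le_real_inner_and_le_real_inner {a b : E} {c d : ℝ} (ha : a = 0 → c ≤ 0)
    (hb : b = 0 → d ≤ 0) (hab : ‖a‖ * ‖b‖ + ⟪a, b⟫_ℝ = 0 → c * ‖b‖ + d * ‖a‖ ≤ 0) :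
    ∃ v : E, c ≤ ⟪a, v⟫_ℝ ∧ d ≤ ⟪b, v⟫_ℝ := by
  set s := ‖a‖ * ‖b‖ + ⟪a, b⟫_ℝ
  rcases (norm_mul_norm_add_real_inner_nonneg a b).eq_or_lt with hs | hs
  · by_cases ha0 : a = 0
    · obtain ⟨v, hv⟩ := exists_le_real_inner hb
      exact ⟨v, by simpa [ha0] using ha ha0, hv⟩
    have hna : 0 < ‖a‖ := norm_pos_iff.mpr ha0
    have hcd := hab hs.symm
    refine ⟨(c / ‖a‖ ^ 2) • a, ?_, ?_⟩
    · rw [real_inner_smul_right, real_inner_self_eq_norm_sq, div_mul_cancel₀ _ (by positivity)]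
    · rw [real_inner_smul_right, real_inner_comm, show ⟪a, b⟫_ℝ = -(‖a‖ * ‖b‖) by linarith,
        div_mul_eq_mul_div, le_div_iff₀ (by positivity)]
      nlinarith
  · have hna : 0 < ‖a‖ := norm_pos_iff.mpr fun h => by simp [h] at hs
    have hnb : 0 < ‖b‖ := norm_pos_iff.mpr fun h => by simp [h] at hs
    set t := max (c / (‖a‖ * s)) (d / (‖b‖ * s))
    refine ⟨t • (‖b‖ • a + ‖a‖ • b), ?_, ?_⟩
    · rw [real_inner_smul_right, real_inner_norm_smul_add_norm_smul_left,
        ← div_le_iff₀ (mul_pos hna hs)]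
      exact le_max_left _ _
    · rw [real_inner_smul_right, real_inner_norm_smul_add_norm_smul_right,
        ← div_le_iff₀ (mul_pos hnb hs)]
      exact le_max_right _ _

end

/-- Compatibility of two affine constraints in ℝ^m (Proposition 2). -/
theorem stmt_3 {m : ℕ} (be bu : EuclideanSpace ℝ (Fin m)) (ce cu : ℝ) :
    (∃ v : EuclideanSpace ℝ (Fin m), ⟪be, v⟫_ℝ ≥ ce ∧ ⟪bu, v⟫_ℝ ≥ cu) ↔
      ((be = 0 → ce ≤ 0) ∧ (bu = 0 → cu ≤ 0) ∧
        (‖be‖ * ‖bu‖ + ⟪be, bu⟫_ℝ = 0 → ce * ‖bu‖ + cu * ‖be‖ ≤ 0)) := by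
  constructor
  · rintro ⟨v, hce, hcu⟩
    exact ⟨fun h => by simpa [h] using hce, fun h => by simpa [h] using hcu,
      mul_norm_add_mul_norm_nonpos hce hcu⟩
  · rintro ⟨hbe, hbu, hanti⟩
    exact exists_le_real_inner_and_le_real_inner hbe hbu hanti
end

section
/- Let b_e, b_u ∈ ℝ^m satisfy: b_e = 0 ⟹ c_e ≤ 0, b_u = 0 ⟹ c_u ≤ 0, and if b_e, b_u are both nonzero and anti-parallel then c_e‖b_u‖ + c_u‖b_e‖ ≤ 0. If b_e and b_u are not anti-parallel and both nonzero (i.e., ‖b_e‖‖b_u‖ + ⟨b_e,b_u⟩ > 0), then there exists v ∈ ℝ^m with b_eᵀv ≥ c_e and b_uᵀv ≥ c_u. -/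
open scoped InnerProductSpace

/-! The vector `u = ‖y‖ • x + ‖x‖ • y` satisfies `⟪x, u⟫ = ‖x‖ D` and `⟪y, u⟫ = ‖y‖ D` with
`D = ‖x‖ ‖y‖ + ⟪x, y⟫ > 0`, so both constraints hold along a large enough multiple of `u`. -/

variable {E : Type*} [NormedAddCommGroup E] [InnerProductSpace ℝ E]

theorem inner_norm_smul_add_norm_smul (x y : E) :
    ⟪x, ‖y‖ • x + ‖x‖ • y⟫_ℝ = ‖x‖ * (‖x‖ * ‖y‖ + ⟪x, y⟫_ℝ) := by
  rw [inner_add_right, real_inner_smul_right, real_inner_smul_right, real_inner_self_eq_norm_sq]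
  ring

theorem norm_pos_of_norm_mul_norm_add_inner_pos {x y : E} (h : 0 < ‖x‖ * ‖y‖ + ⟪x, y⟫_ℝ) :
    0 < ‖x‖ := by
  refine norm_pos_iff.mpr fun hx => ?_
  simp [hx] at h

theorem exists_inner_ge_of_inner_pos {u x y : E} (hx : 0 < ⟪x, u⟫_ℝ) (hy : 0 < ⟪y, u⟫_ℝ)
    (c d : ℝ) : ∃ v : E, c ≤ ⟪x, v⟫_ℝ ∧ d ≤ ⟪y, v⟫_ℝ := by
  set t := max (c / ⟪x, u⟫_ℝ) (d / ⟪y, u⟫_ℝ)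
  refine ⟨t • u, ?_, ?_⟩ <;> rw [real_inner_smul_right, ← div_le_iff₀ (by assumption)]
  · exact le_max_left _ _
  · exact le_max_right _ _

theorem exists_inner_ge_of_norm_mul_norm_add_inner_pos {x y : E}
    (h : 0 < ‖x‖ * ‖y‖ + ⟪x, y⟫_ℝ) (c d : ℝ) : ∃ v : E, c ≤ ⟪x, v⟫_ℝ ∧ d ≤ ⟪y, v⟫_ℝ := by
  have h' : 0 < ‖y‖ * ‖x‖ + ⟪y, x⟫_ℝ := by rwa [mul_comm, real_inner_comm]
  have hx : 0 < ⟪x, ‖y‖ • x + ‖x‖ • y⟫_ℝ := by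
    rw [inner_norm_smul_add_norm_smul]
    exact mul_pos (norm_pos_of_norm_mul_norm_add_inner_pos h) h
  have hy : 0 < ⟪y, ‖y‖ • x + ‖x‖ • y⟫_ℝ := by
    rw [add_comm, inner_norm_smul_add_norm_smul]
    exact mul_pos (norm_pos_of_norm_mul_norm_add_inner_pos h') h'
  exact exists_inner_ge_of_inner_pos hx hy c d

theorem stmt_6_general {m : ℕ} (be bu : EuclideanSpace ℝ (Fin m)) (ce cu : ℝ)
    (hnot : 0 < ‖be‖ * ‖bu‖ + ⟪be, bu⟫_ℝ) :
    ∃ v : EuclideanSpace ℝ (Fin m), ⟪be, v⟫_ℝ ≥ ce ∧ ⟪bu, v⟫_ℝ ≥ cu :=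
  exists_inner_ge_of_norm_mul_norm_add_inner_pos hnot ce cu

/-- Sufficiency in the non-anti-parallel case: a common solution exists. -/
theorem stmt_6 {m : ℕ} (be bu : EuclideanSpace ℝ (Fin m)) (ce cu : ℝ)
    (h1 : be = 0 → ce ≤ 0) (h2 : bu = 0 → cu ≤ 0)
    (h3 : be ≠ 0 → bu ≠ 0 → ‖be‖ * ‖bu‖ + ⟪be, bu⟫_ℝ = 0 →
      ce * ‖bu‖ + cu * ‖be‖ ≤ 0)
    (hbe : be ≠ 0) (hbu : bu ≠ 0)
    (hnot : 0 < ‖be‖ * ‖bu‖ + ⟪be, bu⟫_ℝ) :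
    ∃ v : EuclideanSpace ℝ (Fin m), ⟪be, v⟫_ℝ ≥ ce ∧ ⟪bu, v⟫_ℝ ≥ cu :=
  stmt_6_general be bu ce cu hnot
end
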